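/- In a finite monoid M satisfying ((xy)^ω x)² = (xy)^ω x for all x, y, the identities x^{ω+1} = x^ω, (xy)^ω x (xy)^ω = (xy)^ω, (xy)^ω y (xy)^ω = (xy)^ω, and (xy)^ω (yx)^ω (xy)^ω = (xy)^ω all hold. -/
import Mathlib


/-- `e` is the omega power of `x`: an idempotent positive power of `x`. In a finite
monoid such an `e` exists and is unique for each `x`. -/
def IsOmegaPow {M : Type*} [Monoid M] (x e : M) : Prop :=
  (∃ n : ℕ, 0 < n ∧ x ^ n = e) ∧ e * e = e

private lemma idem_pow {M : Type*} [Monoid M] {e : M} (he : e * e = e) :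
    ∀ k, 0 < k → e ^ k = e := by
  intro k hk
  induction k with
  | zero => omega
  | succ j ih =>
    rcases Nat.eq_zero_or_pos j with h0 | hp
    · subst h0; simp
    · rw [pow_succ, ih hp, he]

private lemma idem_pow_eq {M : Type*} [Monoid M] {x : M} {a b : ℕ} (ha : 0 < a) (hb : 0 < b)
    (hA : x ^ a * x ^ a = x ^ a) (hB : x ^ b * x ^ b = x ^ b) : x ^ a = x ^ b := by
  calc x ^ a = (x ^ a) ^ b := (idem_pow hA b hb).symm
    _ = x ^ (a * b) := (pow_mul x a b).symm
    _ = (x ^ b) ^ a := by rw [Nat.mul_comm, pow_mul]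
    _ = x ^ b := idem_pow hB a ha

private lemma myConjPow {M : Type*} [Monoid M] (x y : M) :
    ∀ j : ℕ, x * (y * x) ^ j = (x * y) ^ j * x := by
  intro j
  induction j with
  | zero => simp
  | succ n ih =>
    calc x * (y * x) ^ (n + 1) = x * ((y * x) * (y * x) ^ n) := by rw [pow_succ']
      _ = (x * y) * (x * (y * x) ^ n) := by simp only [mul_assoc]
      _ = (x * y) * ((x * y) ^ n * x) := by rw [ih]
      _ = (x * y) ^ (n + 1) * x := by simp only [pow_succ', mul_assoc]

private lemma main_aux {M : Type*} [Monoid M] {x y e f : M}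
    (hexe : e * x * e = e) (hfyf : f * y * f = f)
    (hef : x * (f * y) = e) (hfe : y * (e * x) = f)
    (hyxf : (y * x) * f = f) (hxye : (x * y) * e = e) :
    (e * y * e = e) ∧ (e * f * e = e) := by
  have hEF : e * f = x * f := by rw [← hef, mul_assoc, hfyf]
  have hFE : f * e = y * e := by rw [← hfe, mul_assoc, hexe]
  constructor
  · calc e * y * e = e * y * (x * (f * y)) := by rw [hef]
      _ = ((e * (y * x)) * f) * y := by simp only [mul_assoc]
      _ = (e * f) * y := by rw [mul_assoc e (y * x) f, hyxf]
      _ = (x * f) * y := by rw [hEF]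
      _ = x * (f * y) := by rw [mul_assoc]
      _ = e := hef
  · calc e * f * e = (x * f) * e := by rw [hEF]
      _ = x * (f * e) := by rw [mul_assoc]
      _ = x * (y * e) := by rw [hFE]
      _ = (x * y) * e := by rw [mul_assoc]
      _ = e := hxye

/-- In a finite monoid satisfying `((xy)^ω x)² = (xy)^ω x`, the identities
`x^(ω+1) = x^ω`, `(xy)^ω x (xy)^ω = (xy)^ω`, `(xy)^ω y (xy)^ω = (xy)^ω` and
`(xy)^ω (yx)^ω (xy)^ω = (xy)^ω` all hold. -/
theorem identities_of_DA_basis {M : Type*} [Monoid M] [Finite M] (ω : M → M)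
    (hω : ∀ x : M, IsOmegaPow x (ω x))
    (h : ∀ x y : M, (ω (x * y) * x) * (ω (x * y) * x) = ω (x * y) * x) :
    (∀ x : M, ω x * x = ω x) ∧
    (∀ x y : M, ω (x * y) * x * ω (x * y) = ω (x * y)) ∧
    (∀ x y : M, ω (x * y) * y * ω (x * y) = ω (x * y)) ∧
    (∀ x y : M, ω (x * y) * ω (y * x) * ω (x * y) = ω (x * y)) := by
  -- aperiodicity: x^(ω+1) = x^ω
  have aper : ∀ x : M, ω x * x = ω x := by
    intro x
    obtain ⟨⟨n, hn, hxn⟩, hid⟩ := hω x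
    have h1 := h x 1
    rw [mul_one] at h1
    rw [← hxn] at h1 hid ⊢
    rw [← pow_succ] at h1 ⊢
    exact idem_pow_eq (by omega) hn h1 hid
  -- key lemma: ω(ab) a ω(ab) = ω(ab)
  have key : ∀ a b : M, ω (a * b) * a * ω (a * b) = ω (a * b) := by
    intro a b
    obtain ⟨⟨n, hn, hab⟩, hee⟩ := hω (a * b)
    have hh := h a b
    have hat : a * (b * (a * b) ^ (n - 1)) = ω (a * b) := by
      rw [← mul_assoc, ← pow_succ', Nat.sub_add_cancel hn]
      exact hab
    have h3 : (ω (a * b) * a) * (b * (a * b) ^ (n - 1)) = ω (a * b) := by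
      rw [mul_assoc, hat, hee]
    calc ω (a * b) * a * ω (a * b)
        = (ω (a * b) * a) * ((ω (a * b) * a) * (b * (a * b) ^ (n - 1))) := by rw [h3]
      _ = ((ω (a * b) * a) * (ω (a * b) * a)) * (b * (a * b) ^ (n - 1)) := by
          simp only [mul_assoc]
      _ = (ω (a * b) * a) * (b * (a * b) ^ (n - 1)) := by rw [hh]
      _ = ω (a * b) := h3
  have main : ∀ x y : M,
      (ω (x * y) * y * ω (x * y) = ω (x * y)) ∧
      (ω (x * y) * ω (y * x) * ω (x * y) = ω (x * y)) := by
    intro x y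
    obtain ⟨⟨n, hn, hen⟩, heid⟩ := hω (x * y)
    obtain ⟨⟨m, hm, hfm⟩, hfid⟩ := hω (y * x)
    have habs_e : ∀ k, ω (x * y) * (x * y) ^ k = ω (x * y) := by
      intro k
      induction k with
      | zero => simp
      | succ j ih => rw [pow_succ, ← mul_assoc, ih]; exact aper (x * y)
    have habs_f : ∀ k, ω (y * x) * (y * x) ^ k = ω (y * x) := by
      intro k
      induction k with
      | zero => simp
      | succ j ih => rw [pow_succ, ← mul_assoc, ih]; exact aper (y * x)
    have hpow_e : ∀ k, (x * y) ^ (n + k) = ω (x * y) := by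
      intro k; rw [pow_add, hen]; exact habs_e k
    have hpow_f : ∀ k, (y * x) ^ (m + k) = ω (y * x) := by
      intro k; rw [pow_add, hfm]; exact habs_f k
    have hxye : (x * y) * ω (x * y) = ω (x * y) := by
      rw [← hen, ← pow_succ', pow_succ, hen]; exact aper (x * y)
    have hyxf : (y * x) * ω (y * x) = ω (y * x) := by
      rw [← hfm, ← pow_succ', pow_succ, hfm]; exact aper (y * x)
    have hfpow : (y * x) ^ (n + m) = ω (y * x) := by
      rw [Nat.add_comm]; exact hpow_f n
    have hepow : (x * y) ^ (m + n) = ω (x * y) := by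
      rw [Nat.add_comm]; exact hpow_e m
    have hef : x * (ω (y * x) * y) = ω (x * y) := by
      rw [← hfpow, ← mul_assoc, myConjPow, mul_assoc, ← pow_succ, Nat.add_assoc]
      exact hpow_e (m + 1)
    have hfe : y * (ω (x * y) * x) = ω (y * x) := by
      rw [← hepow, ← mul_assoc, myConjPow, mul_assoc, ← pow_succ, Nat.add_assoc]
      exact hpow_f (n + 1)
    exact main_aux (key x y) (key y x) hef hfe hyxf hxye
  exact ⟨aper, fun x y => key x y, fun x y => (main x y).1, fun x y => (main x y).2⟩
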